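/- Let R be a commutative ring, A a bialgebra over R, and F₁, F₂ two A-module algebras. Then the set of invariants {K ∈ F₁ᵒᵖ ⊗_R F₂ : a • K = ε(a)·K for all a ∈ A} is a unital subalgebra of the algebra F₁ᵒᵖ ⊗_R F₂, i.e. it contains 1 ⊗ 1 and is closed under the multiplication (f₁ ⊗ f₂)·(g₁ ⊗ g₂) = (g₁·f₁) ⊗ (f₂·g₂) (products taken in F₁ and F₂ respectively). -/

import Mathlib

open TensorProduct

/-! For an invariant `K`, the map `L ↦ K * L` of `F₁ᵒᵖ ⊗ F₂` is `A`-linear, being the composite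
`l₁ ⊗ l₂ ↦ l₁ ⊗ (K ⊗ l₂) ↦ (l₁ ⊗ k₁) ⊗ (k₂ ⊗ l₂) ↦ l₁k₁ ⊗ k₂l₂` of `A`-linear maps: tensoring
with an invariant vector is `A`-linear by the counit axiom, the associators are `A`-linear by
coassociativity, and the multiplications by assumption. An `A`-linear map sends invariants to
invariants, so `K * L` is invariant when `L` is. -/

/-- Given `R`-linear actions `ρ₁ : A → End F`, `ρ₂ : A → End G`, the action of
`a : A` on `F ⊗[R] G` obtained by restricting the `(A ⊗ A)`-action along the
comultiplication: `a • (ψ₁ ⊗ ψ₂) = Σ (a₍₁₎ • ψ₁) ⊗ (a₍₂₎ • ψ₂)`. -/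
noncomputable def tensorAct (R : Type*) {A F G : Type*} [CommRing R] [Ring A]
    [Bialgebra R A] [AddCommGroup F] [Module R F] [AddCommGroup G] [Module R G]
    (ρ₁ : A →ₗ[R] F →ₗ[R] F) (ρ₂ : A →ₗ[R] G →ₗ[R] G) (a : A) :
    F ⊗[R] G →ₗ[R] F ⊗[R] G :=
  TensorProduct.homTensorHomMap (RingHom.id R) F G F G
    (TensorProduct.map ρ₁ ρ₂ (Coalgebra.comul a))

/-- The multiplication of the algebra `F₁ᵒᵖ ⊗[R] F₂` on the underlying
`R`-module `F₁ ⊗[R] F₂`: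
`(f₁ ⊗ f₂) * (g₁ ⊗ g₂) = (g₁ * f₁) ⊗ (f₂ * g₂)`. -/
noncomputable def opMul (R : Type*) {F G : Type*} [CommRing R] [Ring F]
    [Algebra R F] [Ring G] [Algebra R G] :
    F ⊗[R] G →ₗ[R] F ⊗[R] G →ₗ[R] F ⊗[R] G :=
  (TensorProduct.homTensorHomMap (RingHom.id R) F G F G).comp
    (TensorProduct.map (LinearMap.mul R F).flip (LinearMap.mul R G))

section Equivariance

variable {R A M N P : Type*} [CommSemiring R] [AddCommMonoid A] [Module R A]
  [AddCommMonoid M] [Module R M] [AddCommMonoid N] [Module R N] [AddCommMonoid P] [Module R P]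

def IsEquivariant (σ : A →ₗ[R] M →ₗ[R] M) (τ : A →ₗ[R] N →ₗ[R] N) (f : M →ₗ[R] N) : Prop :=
  ∀ a, f ∘ₗ σ a = τ a ∘ₗ f

def IsCounitInvariant [CoalgebraStruct R A] (σ : A →ₗ[R] M →ₗ[R] M) (m : M) : Prop :=
  ∀ a, σ a m = Coalgebra.counit (R := R) a • m

namespace IsEquivariant

variable {σ : A →ₗ[R] M →ₗ[R] M} {τ : A →ₗ[R] N →ₗ[R] N} {υ : A →ₗ[R] P →ₗ[R] P}

theorem id : IsEquivariant σ σ LinearMap.id := fun a => by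
  rw [LinearMap.id_comp, LinearMap.comp_id]

theorem comp {g : N →ₗ[R] P} {f : M →ₗ[R] N} (hg : IsEquivariant τ υ g)
    (hf : IsEquivariant σ τ f) : IsEquivariant σ υ (g ∘ₗ f) := fun a => by
  rw [LinearMap.comp_assoc, hf a, ← LinearMap.comp_assoc, hg a, LinearMap.comp_assoc]

theorem symm {e : M ≃ₗ[R] N} (he : IsEquivariant σ τ e) : IsEquivariant τ σ e.symm :=
  fun a => by
    rw [LinearEquiv.eq_comp_toLinearMap_symm, LinearMap.comp_assoc, ← he a,
      ← LinearMap.comp_assoc, LinearEquiv.comp_coe, LinearEquiv.self_trans_symm,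
      LinearEquiv.refl_toLinearMap, LinearMap.id_comp]

theorem comp_flip {f : M →ₗ[R] N} (hf : IsEquivariant σ τ f) (m : M) :
    f ∘ₗ σ.flip m = τ.flip (f m) :=
  LinearMap.ext fun a => LinearMap.congr_fun (hf a) m

end IsEquivariant

theorem IsCounitInvariant.map [CoalgebraStruct R A] {σ : A →ₗ[R] M →ₗ[R] M}
    {τ : A →ₗ[R] N →ₗ[R] N} {m : M} (hm : IsCounitInvariant σ m) {f : M →ₗ[R] N}
    (hf : IsEquivariant σ τ f) : IsCounitInvariant τ (f m) := fun a => by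
  rw [← LinearMap.comp_apply, ← hf a, LinearMap.comp_apply, hm a, map_smul]

end Equivariance

section TensorAction

variable {R A M N P M' N' : Type*} [CommRing R] [Ring A] [Bialgebra R A]
  [AddCommGroup M] [Module R M] [AddCommGroup N] [Module R N] [AddCommGroup P] [Module R P]
  [AddCommGroup M'] [Module R M'] [AddCommGroup N'] [Module R N']

noncomputable def tensorActHom (σ : A →ₗ[R] M →ₗ[R] M) (τ : A →ₗ[R] N →ₗ[R] N) :
    A →ₗ[R] M ⊗[R] N →ₗ[R] M ⊗[R] N :=
  homTensorHomMap (RingHom.id R) M N M N ∘ₗ map σ τ ∘ₗ Coalgebra.comul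

@[simp] theorem tensorActHom_apply (σ : A →ₗ[R] M →ₗ[R] M) (τ : A →ₗ[R] N →ₗ[R] N) (a : A) :
    tensorActHom σ τ a = tensorAct R σ τ a := rfl

theorem tensorAct_tmul (σ : A →ₗ[R] M →ₗ[R] M) (τ : A →ₗ[R] N →ₗ[R] N) (a : A) (m : M)
    (n : N) : tensorAct R σ τ a (m ⊗ₜ n) = map (σ.flip m) (τ.flip n) (Coalgebra.comul a) := by
  unfold tensorAct
  induction Coalgebra.comul (R := R) a using TensorProduct.induction_on with
  | zero => simp
  | tmul x y => simp
  | add x y hx hy => simp only [map_add, LinearMap.add_apply, hx, hy]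

theorem tensorActHom_flip_tmul (σ : A →ₗ[R] M →ₗ[R] M) (τ : A →ₗ[R] N →ₗ[R] N) (m : M)
    (n : N) : (tensorActHom σ τ).flip (m ⊗ₜ n) = map (σ.flip m) (τ.flip n) ∘ₗ Coalgebra.comul :=
  LinearMap.ext fun a => tensorAct_tmul σ τ a m n

variable {σ : A →ₗ[R] M →ₗ[R] M} {τ : A →ₗ[R] N →ₗ[R] N} {υ : A →ₗ[R] P →ₗ[R] P}

theorem IsEquivariant.tensorMap {σ' : A →ₗ[R] M' →ₗ[R] M'} {τ' : A →ₗ[R] N' →ₗ[R] N'}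
    {f : M →ₗ[R] M'} {g : N →ₗ[R] N'} (hf : IsEquivariant σ σ' f) (hg : IsEquivariant τ τ' g) :
    IsEquivariant (tensorActHom σ τ) (tensorActHom σ' τ') (map f g) := fun a =>
  TensorProduct.ext' fun m n => by
    simp only [LinearMap.comp_apply, map_tmul, tensorActHom_apply, tensorAct_tmul, map_map,
      hf.comp_flip, hg.comp_flip]

theorem isEquivariant_assoc :
    IsEquivariant (tensorActHom (tensorActHom σ τ) υ) (tensorActHom σ (tensorActHom τ υ))
      (TensorProduct.assoc R M N P) := fun a =>
  TensorProduct.ext_threefold fun m n p => by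
    simp only [LinearMap.comp_apply, LinearEquiv.coe_coe, tensorActHom_apply, assoc_tmul,
      tensorAct_tmul, tensorActHom_flip_tmul]
    rw [← LinearMap.map_comp_rTensor, LinearMap.comp_apply, ← map_map_assoc,
      Coalgebra.coassoc_apply, LinearMap.map_lTensor]

theorem tensorAct_tmul_of_isCounitInvariant {m : M} (hm : IsCounitInvariant σ m) (a : A)
    (n : N) : tensorAct R σ τ a (m ⊗ₜ n) = m ⊗ₜ τ a n := by
  have : σ.flip m = LinearMap.toSpanSingleton R M m ∘ₗ Coalgebra.counit :=
    LinearMap.ext hm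
  rw [tensorAct_tmul, this, ← LinearMap.map_comp_rTensor, LinearMap.comp_apply,
    Coalgebra.rTensor_counit_comul, map_tmul, LinearMap.toSpanSingleton_apply, one_smul,
    LinearMap.flip_apply]

theorem IsCounitInvariant.isEquivariant_mk {m : M} (hm : IsCounitInvariant σ m) :
    IsEquivariant τ (tensorActHom σ τ) (mk R M N m) := fun a =>
  LinearMap.ext fun n => (tensorAct_tmul_of_isCounitInvariant hm a n).symm

theorem IsCounitInvariant.tmul {m : M} {n : N} (hm : IsCounitInvariant σ m)
    (hn : IsCounitInvariant τ n) : IsCounitInvariant (tensorActHom σ τ) (m ⊗ₜ n) := fun a => by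
  rw [tensorActHom_apply, tensorAct_tmul_of_isCounitInvariant hm, hn a, tmul_smul]

end TensorAction

section ModuleAlgebra

variable {R A F₁ F₂ : Type*} [CommRing R] [Ring A] [Bialgebra R A]
  [Ring F₁] [Algebra R F₁] [Ring F₂] [Algebra R F₂]

theorem opMul_apply_eq_comp (K : F₁ ⊗[R] F₂) :
    opMul R K = map (LinearMap.mul' R F₁) (LinearMap.mul' R F₂) ∘ₗ
      (TensorProduct.assoc R F₁ F₁ (F₂ ⊗[R] F₂)).symm.toLinearMap ∘ₗ
      (TensorProduct.assoc R F₁ F₂ F₂).toLinearMap.lTensor F₁ ∘ₗ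
      (mk R (F₁ ⊗[R] F₂) F₂ K).lTensor F₁ := by
  refine TensorProduct.ext' fun l₁ l₂ => ?_
  induction K using TensorProduct.induction_on with
  | zero => simp
  | tmul k₁ k₂ => simp [opMul]
  | add K K' hK hK' =>
    simp only [map_add, LinearMap.add_apply, LinearMap.lTensor_add, LinearMap.comp_add, hK, hK']

theorem isEquivariant_opMul {ρ₁ : A →ₗ[R] F₁ →ₗ[R] F₁} {ρ₂ : A →ₗ[R] F₂ →ₗ[R] F₂}
    (h₁ : IsEquivariant (tensorActHom ρ₁ ρ₁) ρ₁ (LinearMap.mul' R F₁))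
    (h₂ : IsEquivariant (tensorActHom ρ₂ ρ₂) ρ₂ (LinearMap.mul' R F₂))
    {K : F₁ ⊗[R] F₂} (hK : IsCounitInvariant (tensorActHom ρ₁ ρ₂) K) :
    IsEquivariant (tensorActHom ρ₁ ρ₂) (tensorActHom ρ₁ ρ₂) (opMul R K) := by
  rw [opMul_apply_eq_comp]
  exact (h₁.tensorMap h₂).comp <| isEquivariant_assoc.symm.comp <|
    (IsEquivariant.id.tensorMap isEquivariant_assoc).comp <|
    IsEquivariant.id.tensorMap hK.isEquivariant_mk

end ModuleAlgebra

theorem invariants_subalgebra_general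
    {R A F₁ F₂ : Type*} [CommRing R] [Ring A] [Bialgebra R A]
    [Ring F₁] [Algebra R F₁] [Ring F₂] [Algebra R F₂]
    (ρ₁ : A →ₗ[R] F₁ →ₗ[R] F₁) (ρ₂ : A →ₗ[R] F₂ →ₗ[R] F₂)
    -- the multiplications `F₁ ⊗ F₁ → F₁` and `F₂ ⊗ F₂ → F₂` are `A`-linear:
    (h1cov : ∀ a : A,
      (LinearMap.mul' R F₁) ∘ₗ tensorAct R ρ₁ ρ₁ a = ρ₁ a ∘ₗ LinearMap.mul' R F₁)
    (h2cov : ∀ a : A,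
      (LinearMap.mul' R F₂) ∘ₗ tensorAct R ρ₂ ρ₂ a = ρ₂ a ∘ₗ LinearMap.mul' R F₂)
    -- the units are invariant: `a • 1 = ε(a) • 1`:
    (h1unit : ∀ a : A, ρ₁ a 1 = Coalgebra.counit (R := R) a • (1 : F₁))
    (h2unit : ∀ a : A, ρ₂ a 1 = Coalgebra.counit (R := R) a • (1 : F₂)) :
    (∀ a : A, tensorAct R ρ₁ ρ₂ a ((1 : F₁) ⊗ₜ[R] (1 : F₂)) =
        Coalgebra.counit (R := R) a • ((1 : F₁) ⊗ₜ[R] (1 : F₂))) ∧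
      ∀ K L : F₁ ⊗[R] F₂,
        (∀ a : A, tensorAct R ρ₁ ρ₂ a K = Coalgebra.counit (R := R) a • K) →
        (∀ a : A, tensorAct R ρ₁ ρ₂ a L = Coalgebra.counit (R := R) a • L) →
        ∀ a : A, tensorAct R ρ₁ ρ₂ a (opMul R K L) =
          Coalgebra.counit (R := R) a • opMul R K L :=
  ⟨IsCounitInvariant.tmul h1unit h2unit, fun _ _ hK hL =>
    IsCounitInvariant.map (σ := tensorActHom ρ₁ ρ₂) hL (isEquivariant_opMul h1cov h2cov hK)⟩

/-- Let `A` be a bialgebra over a commutative ring `R` and let `F₁`, `F₂` be two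
`A`-module algebras (with actions `ρ₁`, `ρ₂`).  The invariants
`{K ∈ F₁ᵒᵖ ⊗[R] F₂ | ∀ a, a • K = ε(a) • K}` form a unital subalgebra of
`F₁ᵒᵖ ⊗[R] F₂`: they contain the unit `1 ⊗ 1` and are closed under the
multiplication `(f₁ ⊗ f₂) * (g₁ ⊗ g₂) = (g₁ f₁) ⊗ (f₂ g₂)`. -/
theorem invariants_subalgebra
    {R A F₁ F₂ : Type*} [CommRing R] [Ring A] [Bialgebra R A]
    [Ring F₁] [Algebra R F₁] [Ring F₂] [Algebra R F₂]
    (ρ₁ : A →ₗ[R] F₁ →ₗ[R] F₁) (ρ₂ : A →ₗ[R] F₂ →ₗ[R] F₂)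
    -- `ρ₁`, `ρ₂` are module structures:
    (h1one : ρ₁ 1 = LinearMap.id) (h1mul : ∀ a b : A, ρ₁ (a * b) = ρ₁ a ∘ₗ ρ₁ b)
    (h2one : ρ₂ 1 = LinearMap.id) (h2mul : ∀ a b : A, ρ₂ (a * b) = ρ₂ a ∘ₗ ρ₂ b)
    -- the multiplications `F₁ ⊗ F₁ → F₁` and `F₂ ⊗ F₂ → F₂` are `A`-linear:
    (h1cov : ∀ a : A,
      (LinearMap.mul' R F₁) ∘ₗ tensorAct R ρ₁ ρ₁ a = ρ₁ a ∘ₗ LinearMap.mul' R F₁)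
    (h2cov : ∀ a : A,
      (LinearMap.mul' R F₂) ∘ₗ tensorAct R ρ₂ ρ₂ a = ρ₂ a ∘ₗ LinearMap.mul' R F₂)
    -- the units are invariant: `a • 1 = ε(a) • 1`:
    (h1unit : ∀ a : A, ρ₁ a 1 = Coalgebra.counit (R := R) a • (1 : F₁))
    (h2unit : ∀ a : A, ρ₂ a 1 = Coalgebra.counit (R := R) a • (1 : F₂)) :
    (∀ a : A, tensorAct R ρ₁ ρ₂ a ((1 : F₁) ⊗ₜ[R] (1 : F₂)) =
        Coalgebra.counit (R := R) a • ((1 : F₁) ⊗ₜ[R] (1 : F₂))) ∧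
      ∀ K L : F₁ ⊗[R] F₂,
        (∀ a : A, tensorAct R ρ₁ ρ₂ a K = Coalgebra.counit (R := R) a • K) →
        (∀ a : A, tensorAct R ρ₁ ρ₂ a L = Coalgebra.counit (R := R) a • L) →
        ∀ a : A, tensorAct R ρ₁ ρ₂ a (opMul R K L) =
          Coalgebra.counit (R := R) a • opMul R K L :=
  invariants_subalgebra_general ρ₁ ρ₂ h1cov h2cov h1unit h2unit
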